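/- Let G be a finite simple graph on n ≥ 2 vertices, let G ∘ K₁ be its corona, and let k be an integer with n < k < 2n. Then the k-dominating graph D_k(G ∘ K₁) is Eulerian if and only if n is even and k = n + 1. -/

import Mathlib

open SimpleGraph

/-- `D` is a dominating set of `G`: every vertex not in `D` has a neighbour in `D`. -/
def IsDomSet {V : Type*} (G : SimpleGraph V) (D : Set V) : Prop :=
  ∀ v ∉ D, ∃ u ∈ D, G.Adj u v

/-- The dominating graph of `G`: vertices are dominating sets of `G`, two dominating
sets are adjacent iff their symmetric difference has exactly one element. -/
def DomGraph {V : Type*} (G : SimpleGraph V) :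
    SimpleGraph {D : Set V // IsDomSet G D} where
  Adj A B := (symmDiff A.1 B.1).ncard = 1
  symm := ⟨fun A B h => by
    have h' : (symmDiff A.1 B.1).ncard = 1 := h
    show (symmDiff B.1 A.1).ncard = 1
    rwa [symmDiff_comm]⟩
  loopless := ⟨fun A h => by
    have h' : (symmDiff A.1 A.1).ncard = 1 := h
    simp [symmDiff_self, Set.bot_eq_empty] at h'⟩

/-- The `k`-dominating graph of `G`: vertices are dominating sets of `G` of cardinality
at most `k`, two such sets are adjacent iff their symmetric difference has exactly one
element. -/
def KDomGraph {V : Type*} (G : SimpleGraph V) (k : ℕ) :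
    SimpleGraph {D : Set V // IsDomSet G D ∧ D.ncard ≤ k} where
  Adj A B := (symmDiff A.1 B.1).ncard = 1
  symm := ⟨fun A B h => by
    have h' : (symmDiff A.1 B.1).ncard = 1 := h
    show (symmDiff B.1 A.1).ncard = 1
    rwa [symmDiff_comm]⟩
  loopless := ⟨fun A h => by
    have h' : (symmDiff A.1 A.1).ncard = 1 := h
    simp [symmDiff_self, Set.bot_eq_empty] at h'⟩

/-- A graph is Eulerian iff every vertex has even degree and any two edges lie in the
same connected component (i.e. at most one component contains an edge). -/
def IsEulerian {W : Type*} (H : SimpleGraph W) : Prop :=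
  (∀ v : W, Even (H.neighborSet v).ncard) ∧
  ∀ u v x y : W, H.Adj u v → H.Adj x y → H.Reachable u x

/-- The corona `G ∘ K₁` of `G`: attach a pendant vertex to every vertex of `G`. -/
def corona {V : Type*} (G : SimpleGraph V) : SimpleGraph (V ⊕ V) where
  Adj x y :=
    match x, y with
    | Sum.inl a, Sum.inl b => G.Adj a b
    | Sum.inl a, Sum.inr b => a = b
    | Sum.inr a, Sum.inl b => a = b
    | Sum.inr _, Sum.inr _ => False
  symm := ⟨by
    rintro (a | a) (b | b) h
    · exact G.symm.symm _ _ h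
    · exact h.symm
    · exact h.symm
    · exact h.elim⟩
  loopless := ⟨by
    rintro (a | a) h
    · exact G.loopless.irrefl a h
    · exact h⟩


/-! A set `D ⊆ V ⊕ V` dominates `G ∘ K₁` iff it meets every pair `{x, x.swap}`, and then a
vertex `x ∈ D` can be removed iff `x.swap ∈ D`; counting gives `|D ∩ swap D| = 2|D| - 2n`.
So in `D_k(G ∘ K₁)` a dominating set `D` has degree `(2n - |D|) + (2|D| - 2n) = |D|` when
`|D| < k`, and degree `2(k - n)` when `|D| = k`. For `k > n + 1` the sets `inl(V)` and
`inl(V) ∪ {inr a}` have the degrees `n` and `n + 1`, one of them odd; for `k = n + 1` every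
degree is `n` or even. Finally, for every `k > n` each `inr c` of a dominating set can be traded
for `inl c` (first dropping a redundant pendant vertex if the set is full), so every vertex of
`D_k` is joined to `inl(V)`. -/

namespace Set

variable {α : Type*} {s : Set α} {x : α}

theorem symmDiff_singleton_of_mem (hx : x ∈ s) : symmDiff s {x} = s \ {x} := by
  ext y
  by_cases hy : y = x <;> simp [Set.mem_symmDiff, hy, hx]

theorem symmDiff_singleton_of_notMem (hx : x ∉ s) : symmDiff s {x} = insert x s := by
  ext y
  by_cases hy : y = x <;> simp [Set.mem_symmDiff, hy, hx]

end Set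

theorem IsDomSet.mono {W : Type*} {H : SimpleGraph W} {D D' : Set W} (h : IsDomSet H D)
    (hDD' : D ⊆ D') : IsDomSet H D' := fun v hv =>
  let ⟨u, hu, huv⟩ := h v (fun hvD => hv (hDD' hvD))
  ⟨u, hDD' hu, huv⟩

namespace KDomGraph

variable {W : Type*} {H : SimpleGraph W} {k : ℕ}

theorem adj_of_eq_symmDiff {A B : {D : Set W // IsDomSet H D ∧ D.ncard ≤ k}} {x : W}
    (h : B.1 = symmDiff A.1 {x}) : (KDomGraph H k).Adj A B := by
  show (symmDiff A.1 B.1).ncard = 1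
  rw [h, symmDiff_symmDiff_cancel_left, Set.ncard_singleton]

theorem ncard_neighborSet_eq_ncard_setOf (A : {D : Set W // IsDomSet H D ∧ D.ncard ≤ k}) :
    ((KDomGraph H k).neighborSet A).ncard =
      {x | IsDomSet H (symmDiff A.1 {x}) ∧ (symmDiff A.1 {x}).ncard ≤ k}.ncard := by
  symm
  refine Set.ncard_congr (fun x hx => ⟨symmDiff A.1 {x}, hx⟩)
    (fun x _ => adj_of_eq_symmDiff rfl) (fun x y _ _ hxy => ?_) (fun B hB => ?_)
  · simpa using congrArg Subtype.val hxy
  · obtain ⟨x, hx⟩ := Set.ncard_eq_one.mp (show (symmDiff A.1 B.1).ncard = 1 from hB)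
    have hB : B.1 = symmDiff A.1 {x} := by rw [← hx, symmDiff_symmDiff_cancel_left]
    exact ⟨x, by rw [Set.mem_ofPred_eq, ← hB]; exact B.2, Subtype.ext hB.symm⟩

theorem setOf_isDomSet_symmDiff_singleton_eq [Finite W] {D : Set W} (hD : IsDomSet H D) (hDk : D.ncard ≤ k) :
    {x | IsDomSet H (symmDiff D {x}) ∧ (symmDiff D {x}).ncard ≤ k} =
      {x | x ∉ D ∧ D.ncard < k} ∪ {x | x ∈ D ∧ IsDomSet H (D \ {x})} := by
  ext x
  by_cases hx : x ∈ D
  · simpa [Set.symmDiff_singleton_of_mem hx, hx] using fun _ => Nat.le_succ_of_le hDk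
  · simp [Set.symmDiff_singleton_of_notMem hx, hx, Set.ncard_insert_of_notMem hx,
      hD.mono (Set.subset_insert x D)]

theorem ncard_neighborSet [Finite W] (A : {D : Set W // IsDomSet H D ∧ D.ncard ≤ k}) :
    ((KDomGraph H k).neighborSet A).ncard =
      (if A.1.ncard < k then A.1ᶜ.ncard else 0) +
        {x | x ∈ A.1 ∧ IsDomSet H (A.1 \ {x})}.ncard := by
  rw [ncard_neighborSet_eq_ncard_setOf, setOf_isDomSet_symmDiff_singleton_eq A.2.1 A.2.2,
    Set.ncard_union_eq (Set.disjoint_left.mpr fun x hx hx' => hx.1 hx'.1)]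
  split_ifs with hk <;> simp [hk, Set.compl_def]

theorem exists_reachable_insert [Finite W] (A : {D : Set W // IsDomSet H D ∧ D.ncard ≤ k})
    {x : W} (hx : x ∈ A.1 ∨ A.1.ncard < k) :
    ∃ B : {D : Set W // IsDomSet H D ∧ D.ncard ≤ k},
      B.1 = insert x A.1 ∧ (KDomGraph H k).Reachable A B := by
  by_cases hxA : x ∈ A.1
  · exact ⟨A, (Set.insert_eq_of_mem hxA).symm, .refl A⟩
  refine ⟨⟨insert x A.1, A.2.1.mono (Set.subset_insert x A.1), ?_⟩, rfl,
    (adj_of_eq_symmDiff (Set.symmDiff_singleton_of_notMem hxA).symm).reachable⟩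
  rw [Set.ncard_insert_of_notMem hxA]
  exact hx.resolve_left hxA

theorem adj_sdiff_singleton [Finite W] (A : {D : Set W // IsDomSet H D ∧ D.ncard ≤ k})
    {x : W} (hx : x ∈ A.1) (hdom : IsDomSet H (A.1 \ {x})) :
    (KDomGraph H k).Adj A ⟨A.1 \ {x}, hdom, (Set.ncard_le_ncard Set.sdiff_subset).trans A.2.2⟩ :=
  adj_of_eq_symmDiff (Set.symmDiff_singleton_of_mem hx).symm

end KDomGraph

section Corona

variable {V : Type*} {G : SimpleGraph V} {D : Set (V ⊕ V)}

theorem corona_adj_swap (x : V ⊕ V) : (corona G).Adj x.swap x := by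
  cases x <;> rfl

theorem isDomSet_corona_iff : IsDomSet (corona G) D ↔ ∀ x, x ∈ D ∨ x.swap ∈ D := by
  refine ⟨fun hD => ?_, fun hD v hv => ⟨v.swap, (hD v).resolve_left hv, corona_adj_swap v⟩⟩
  -- a pendant vertex `inr a` can only be dominated by `inl a`
  have hpendant : ∀ a, Sum.inr a ∈ D ∨ Sum.inl a ∈ D := fun a =>
    or_iff_not_imp_left.mpr fun ha => by
      obtain ⟨u | u, hu, hadj⟩ := hD _ ha
      · exact (show u = a from hadj) ▸ hu
      · exact hadj.elim
  rintro (a | a)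
  · exact (hpendant a).symm
  · exact hpendant a

theorem isDomSet_corona_sdiff_singleton_iff (hD : IsDomSet (corona G) D) (x : V ⊕ V) :
    IsDomSet (corona G) (D \ {x}) ↔ x.swap ∈ D := by
  simp only [isDomSet_corona_iff, Set.mem_sdiff, Set.mem_singleton_iff] at hD ⊢
  refine ⟨fun h => ((h x).resolve_left (by simp)).1, fun hx y => ?_⟩
  by_cases hyx : y = x
  · subst hyx
    exact Or.inr ⟨hx, by cases y <;> simp⟩
  rcases hD y with hy | hy
  · exact Or.inl ⟨hy, hyx⟩
  by_cases hsy : y.swap = x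
  · exact Or.inl ⟨by rw [← Sum.swap_swap y, hsy]; exact hx, hyx⟩
  · exact Or.inr ⟨hy, hsy⟩

theorem sep_isDomSet_corona_sdiff_singleton_eq (hD : IsDomSet (corona G) D) :
    {x | x ∈ D ∧ IsDomSet (corona G) (D \ {x})} = D ∩ Sum.swap ⁻¹' D := by
  ext x
  simp [isDomSet_corona_sdiff_singleton_iff hD]

theorem isDomSet_corona_range_inl_union (S : Set V) :
    IsDomSet (corona G) (Set.range Sum.inl ∪ Sum.inr '' S) :=
  isDomSet_corona_iff.mpr fun x => by cases x <;> simp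

variable [Finite V]

theorem ncard_range_inl_union_image_inr (S : Set V) :
    (Set.range (Sum.inl : V → V ⊕ V) ∪ Sum.inr '' S).ncard = Nat.card V + S.ncard := by
  rw [Set.ncard_union_eq (Set.disjoint_left.mpr (by simp)),
    Set.ncard_range_of_injective Sum.inl_injective,
    Set.ncard_image_of_injective S Sum.inr_injective]

theorem ncard_inter_swap_preimage_add_of_isDomSet_corona (hD : IsDomSet (corona G) D) :
    (D ∩ Sum.swap ⁻¹' D).ncard + 2 * Nat.card V = 2 * D.ncard := by
  have hunion : D ∪ Sum.swap ⁻¹' D = Set.univ :=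
    Set.eq_univ_of_forall (isDomSet_corona_iff.mp hD)
  have hswap : (Sum.swap ⁻¹' D).ncard = D.ncard :=
    Set.ncard_preimage_of_injective_subset_range Sum.swap_leftInverse.injective
      (by simp [Sum.swap_leftInverse.surjective.range_eq])
  have := Set.ncard_union_add_ncard_inter D (Sum.swap ⁻¹' D)
  rw [hunion, Set.ncard_univ, Nat.card_sum, hswap] at this
  omega

end Corona

namespace KDomGraph

variable {V : Type*} [Finite V] {G : SimpleGraph V} {k : ℕ}

theorem ncard_neighborSet_corona_of_lt
    (A : {D : Set (V ⊕ V) // IsDomSet (corona G) D ∧ D.ncard ≤ k}) (hA : A.1.ncard < k) :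
    ((KDomGraph (corona G) k).neighborSet A).ncard = A.1.ncard := by
  rw [ncard_neighborSet, if_pos hA, sep_isDomSet_corona_sdiff_singleton_eq A.2.1]
  have hcompl := Set.ncard_add_ncard_compl A.1
  have hinter := ncard_inter_swap_preimage_add_of_isDomSet_corona A.2.1
  rw [Nat.card_sum] at hcompl
  omega

theorem ncard_neighborSet_corona_of_eq
    (A : {D : Set (V ⊕ V) // IsDomSet (corona G) D ∧ D.ncard ≤ k}) (hA : A.1.ncard = k) :
    ((KDomGraph (corona G) k).neighborSet A).ncard = 2 * (k - Nat.card V) := by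
  rw [ncard_neighborSet, if_neg hA.not_lt, sep_isDomSet_corona_sdiff_singleton_eq A.2.1]
  have := ncard_inter_swap_preimage_add_of_isDomSet_corona A.2.1
  omega

theorem corona_exists_reachable_ncard_preimage_inr_lt (hk : Nat.card V < k)
    (A : {D : Set (V ⊕ V) // IsDomSet (corona G) D ∧ D.ncard ≤ k})
    (hA : (Sum.inr ⁻¹' A.1).Nonempty) :
    ∃ B, (Sum.inr ⁻¹' B.1).ncard < (Sum.inr ⁻¹' A.1).ncard ∧
      (KDomGraph (corona G) k).Reachable A B := by
  -- `inl c` can be added unless `A` is full, and a full `A` contains a pair `inl c, inr c`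
  obtain ⟨c, hc, hroom⟩ : ∃ c, Sum.inr c ∈ A.1 ∧ (Sum.inl c ∈ A.1 ∨ A.1.ncard < k) := by
    by_cases hpair : ∃ c, Sum.inl c ∈ A.1 ∧ Sum.inr c ∈ A.1
    · obtain ⟨c, hl, hr⟩ := hpair
      exact ⟨c, hr, Or.inl hl⟩
    obtain ⟨a, ha⟩ := hA
    refine ⟨a, ha, Or.inr ?_⟩
    have hempty : A.1 ∩ Sum.swap ⁻¹' A.1 = ∅ := by
      refine Set.eq_empty_of_forall_notMem ?_
      rintro (c | c) ⟨h, h'⟩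
      exacts [hpair ⟨c, h, h'⟩, hpair ⟨c, h', h⟩]
    have := ncard_inter_swap_preimage_add_of_isDomSet_corona A.2.1
    rw [hempty, Set.ncard_empty] at this
    omega
  obtain ⟨A₁, hA₁, hAA₁⟩ := exists_reachable_insert A hroom
  have hc₁ : Sum.inr c ∈ A₁.1 := hA₁ ▸ Set.mem_insert_of_mem _ hc
  have hdom := (isDomSet_corona_sdiff_singleton_iff A₁.2.1 (Sum.inr c)).mpr
    (hA₁ ▸ Set.mem_insert _ _)
  refine ⟨_, ?_, hAA₁.trans (adj_sdiff_singleton A₁ hc₁ hdom).reachable⟩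
  have hpre : Sum.inr ⁻¹' (A₁.1 \ {Sum.inr c}) = Sum.inr ⁻¹' A.1 \ {c} := by
    ext
    simp [hA₁]
  rw [hpre]
  exact Set.ncard_sdiff_singleton_lt_of_mem hc

theorem corona_preconnected (hk : Nat.card V < k) : (KDomGraph (corona G) k).Preconnected := by
  let base : {D : Set (V ⊕ V) // IsDomSet (corona G) D ∧ D.ncard ≤ k} :=
    ⟨Set.range Sum.inl ∪ Sum.inr '' ∅, isDomSet_corona_range_inl_union ∅, by
      rw [ncard_range_inl_union_image_inr]
      simpa using hk.le⟩
  suffices h : ∀ A, (KDomGraph (corona G) k).Reachable A base from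
    fun A B => (h A).trans (h B).symm
  intro A
  induction hm : (Sum.inr ⁻¹' A.1).ncard using Nat.strong_induction_on generalizing A with
  | _ m ih =>
    rcases (Sum.inr ⁻¹' A.1).eq_empty_or_nonempty with hA | hA
    · have hnotMem (a : V) : Sum.inr a ∉ A.1 := Set.eq_empty_iff_forall_notMem.mp hA a
      have hAbase : A = base := by
        refine Subtype.ext (Set.ext ?_)
        rintro (a | a)
        · simpa [base] using (isDomSet_corona_iff.mp A.2.1 (Sum.inl a)).resolve_right (hnotMem a)
        · simpa [base] using hnotMem a
      rw [hAbase]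
    · obtain ⟨B, hlt, hAB⟩ := corona_exists_reachable_ncard_preimage_inr_lt hk A hA
      exact hAB.trans (ih _ (hm ▸ hlt) B rfl)

end KDomGraph

theorem kDomGraph_corona_eulerian_iff_general {V : Type*} [Fintype V] (G : SimpleGraph V)
    (hn : 2 ≤ Fintype.card V) (k : ℕ)
    (hk1 : Fintype.card V < k) :
    IsEulerian (KDomGraph (corona G) k) ↔
      Even (Fintype.card V) ∧ k = Fintype.card V + 1 := by
  simp only [← Nat.card_eq_fintype_card] at hn hk1 ⊢
  constructor
  · rintro ⟨heven, -⟩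
    have heven_of_lt (S : Set V) (hS : Nat.card V + S.ncard < k) :
        Even (Nat.card V + S.ncard) := by
      have hcard := ncard_range_inl_union_image_inr (V := V) S
      have := heven ⟨_, isDomSet_corona_range_inl_union S, hcard.trans_le hS.le⟩
      rwa [KDomGraph.ncard_neighborSet_corona_of_lt _ (hcard.trans_lt hS), hcard] at this
    have hV : Even (Nat.card V) := by simpa using heven_of_lt ∅ (by simpa using hk1)
    refine ⟨hV, le_antisymm (not_lt.mp fun hk => ?_) hk1⟩
    obtain ⟨a⟩ : Nonempty V := Nat.card_pos_iff.mp (by omega) |>.1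
    exact Nat.not_even_iff_odd.mpr hV.add_one (by simpa using heven_of_lt {a} (by simpa using hk))
  · rintro ⟨hV, rfl⟩
    refine ⟨fun A => ?_, fun u _ x _ _ _ => KDomGraph.corona_preconnected (by omega) u x⟩
    have hcount := ncard_inter_swap_preimage_add_of_isDomSet_corona A.2.1
    rcases A.2.2.lt_or_eq with hlt | heq
    · rw [KDomGraph.ncard_neighborSet_corona_of_lt A hlt, show A.1.ncard = Nat.card V by omega]
      exact hV
    · rw [KDomGraph.ncard_neighborSet_corona_of_eq A heq]
      exact even_two_mul _

/-- For a graph `G` on `n ≥ 2` vertices and `n < k < 2n`, the `k`-dominating graph of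
the corona `G ∘ K₁` is Eulerian iff `n` is even and `k = n + 1`. -/
theorem kDomGraph_corona_eulerian_iff {V : Type*} [Fintype V] (G : SimpleGraph V)
    (hn : 2 ≤ Fintype.card V) (k : ℕ)
    (hk1 : Fintype.card V < k) (hk2 : k < 2 * Fintype.card V) :
    IsEulerian (KDomGraph (corona G) k) ↔
      Even (Fintype.card V) ∧ k = Fintype.card V + 1 :=
  kDomGraph_corona_eulerian_iff_general G hn k hk1
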